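/- arXiv:2204.05020 — 2 statements merged into one kernel-verified Lean document; each statement's English description precedes it below -/
import Mathlib

section
/- Suppose C attains its maximum M at a unique point θ₁ of the period interval [θ₁, θ₁ + 2S). Then: (i) for every integer k ≥ 0 and every ν ≥ k + 1, lim_{λ→M⁺} (λ − M)^ν · L^{(k)}(λ) = 0; (ii) if moreover there exist constants A > 0, α ≥ 1 and ε > 0 such that M − C(θ) ≥ A·|θ − θ₁|^α for all θ with |θ − θ₁| < ε, then lim_{λ→M⁺} (λ − M)^ν · L^{(k)}(λ) = 0 for every ν > k + 1 − 1/α. -/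
open MeasureTheory Filter Set Topology

/-! Differentiating under the integral sign gives `L⁽ᵏ⁾(λ) = (-1)ᵏ k! ∫ (λ - C)^-(k+1)`.
Since `C < M` off the null set `θ₁ + 2Sℤ`, dominated convergence applied to
`((λ - M) / (λ - C))^(k+1) ≤ 1` yields (i). For (ii), every `0 ≤ β ≤ k + 1` gives
`(λ - C)^-(k+1) ≤ (λ - M)^(β-(k+1)) (M - C)^-β`, and the growth condition makes `(M - C)^-β`,
which is at most `A^-β |θ - θ₁|^-(αβ)` near `θ₁`, integrable as soon as `αβ < 1`;
a `β ∈ (k + 1 - ν, 1/α)` makes the remaining exponent `ν + β - (k + 1)` positive. -/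

namespace Function.Periodic

variable {f : ℝ → ℝ} {T x₀ y : ℝ}

theorem ae_ne_of_setOf_Ico_eq_singleton (hf : Periodic f T) (hT : 0 < T)
    (h : {x | x ∈ Ico x₀ (x₀ + T) ∧ f x = y} = {x₀}) : ∀ᵐ x, f x ≠ y := by
  have hsub : {x | f x = y} ⊆ range fun n : ℤ => x₀ + n • T := by
    intro x hx
    have hmod : toIcoMod hT x₀ x ∈ {x | x ∈ Ico x₀ (x₀ + T) ∧ f x = y} :=
      ⟨toIcoMod_mem_Ico hT x₀ x, by rw [← self_sub_toIcoDiv_zsmul, hf.sub_zsmul_eq]; exact hx⟩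
    rw [h, mem_singleton_iff] at hmod
    have hdecomp := toIcoMod_add_toIcoDiv_zsmul hT x₀ x
    rw [hmod] at hdecomp
    exact ⟨toIcoDiv hT x₀ x, hdecomp⟩
  rw [ae_iff]
  simpa only [not_not] using measure_mono_null hsub ((countable_range _).measure_zero _)

theorem ne_of_setOf_Ico_eq_singleton (hf : Periodic f T)
    (h : {x | x ∈ Ico x₀ (x₀ + T) ∧ f x = y} = {x₀}) {x : ℝ} (hx₀ : 0 < |x - x₀|)
    (hxT : |x - x₀| < T) : f x ≠ y := by
  intro hx
  rcases le_or_gt x₀ x with hle | hlt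
  · have hmem : x ∈ {x | x ∈ Ico x₀ (x₀ + T) ∧ f x = y} :=
      ⟨⟨hle, by linarith [le_abs_self (x - x₀)]⟩, hx⟩
    rw [h, mem_singleton_iff] at hmem
    simp [hmem] at hx₀
  · have hmem : x + T ∈ {x | x ∈ Ico x₀ (x₀ + T) ∧ f x = y} :=
      ⟨⟨by linarith [neg_abs_le (x - x₀)], by linarith⟩, by rw [hf]; exact hx⟩
    rw [h, mem_singleton_iff] at hmem
    linarith [neg_abs_le (x - x₀)]

end Function.Periodic

theorem intervalIntegrable_abs_sub_rpow {p : ℝ} (hp : -1 < p) (x₀ a b : ℝ) :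
    IntervalIntegrable (fun x => |x - x₀| ^ p) volume a b := by
  suffices h : ∀ a b : ℝ, IntervalIntegrable (fun x : ℝ => |x| ^ p) volume a b by
    simpa using (h (a - x₀) (b - x₀)).comp_sub_right x₀
  intro a b
  obtain ⟨R, hR⟩ := (Metric.isBounded_Icc (min a b) (max a b)).subset_ball 0
  have hball : IntegrableOn (fun x : ℝ => |x| ^ p) (Metric.ball 0 R) :=
    integrableOn_ball_of_norm_le_rpow (C := 1) (α := -p) (by simp) (by simp; linarith)
      (ae_of_all _ fun x => by simp [Real.abs_rpow_of_nonneg (abs_nonneg x)])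
      (continuous_abs.measurable.pow_const p).aestronglyMeasurable
  exact (hball.mono_set hR).intervalIntegrable

theorem intervalIntegrable_rpow_neg_of_growth {g : ℝ → ℝ} {a b x₀ A α β ε : ℝ}
    (hg : Continuous g) (hA : 0 < A) (hε : 0 < ε) (hβ : 0 ≤ β) (hαβ : α * β < 1)
    (hpos : ∀ x ∈ uIcc a b, x ≠ x₀ → 0 < g x)
    (hgrowth : ∀ x, |x - x₀| < ε → A * |x - x₀| ^ α ≤ g x) :
    IntervalIntegrable (fun x => g x ^ (-β)) volume a b := by
  have hmeas : AEStronglyMeasurable (fun x => g x ^ (-β)) :=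
    (hg.measurable.pow_const _).aestronglyMeasurable
  have hnear : IntegrableOn (fun x => g x ^ (-β)) (uIcc a b ∩ Metric.ball x₀ ε) := by
    have hdom : IntegrableOn (fun x => A ^ (-β) * |x - x₀| ^ (-(α * β))) (uIcc a b) :=
      ((intervalIntegrable_iff' enorm_ne_top).1
        ((intervalIntegrable_abs_sub_rpow (by linarith) x₀ a b).const_mul _))
    refine (hdom.mono_set inter_subset_left).mono' hmeas.restrict ?_
    have hx₀ : ∀ᵐ x ∂volume.restrict (uIcc a b ∩ Metric.ball x₀ ε), x ≠ x₀ :=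
      ae_restrict_of_ae (by simp [ae_iff])
    filter_upwards [ae_restrict_mem (measurableSet_uIcc.inter Metric.isOpen_ball.measurableSet),
      hx₀] with x hx hne
    have hdist : 0 < |x - x₀| := abs_pos.2 (sub_ne_zero.2 hne)
    have hle := hgrowth x (by simpa [Real.dist_eq] using hx.2)
    have hlow : 0 < A * |x - x₀| ^ α := by positivity
    rw [Real.norm_of_nonneg (Real.rpow_nonneg (hlow.le.trans hle) _)]
    calc g x ^ (-β) ≤ (A * |x - x₀| ^ α) ^ (-β) :=
          Real.rpow_le_rpow_of_nonpos hlow hle (by linarith)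
      _ = A ^ (-β) * |x - x₀| ^ (-(α * β)) := by
          rw [Real.mul_rpow hA.le (by positivity), ← Real.rpow_mul (abs_nonneg _), mul_neg]
  have hfar : IntegrableOn (fun x => g x ^ (-β)) (uIcc a b \ Metric.ball x₀ ε) := by
    refine ContinuousOn.integrableOn_compact (isCompact_uIcc.diff Metric.isOpen_ball)
      fun x hx => (hg.continuousAt.rpow_const (Or.inl ?_)).continuousWithinAt
    exact (hpos x hx.1 fun h => hx.2 (h ▸ Metric.mem_ball_self hε)).ne'
  exact (intervalIntegrable_iff' enorm_ne_top).2
    (inter_union_sdiff (uIcc a b) _ ▸ hnear.union hfar)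

theorem inv_pow_le_rpow_mul_rpow {x y z β : ℝ} (k : ℕ) (hx : 0 < x) (hy : 0 < y)
    (hxz : x ≤ z) (hyz : y ≤ z) (hβ : 0 ≤ β) (hβk : β ≤ k + 1) :
    (z ^ (k + 1))⁻¹ ≤ x ^ (β - (k + 1)) * y ^ (-β) := by
  have hz : 0 < z := hx.trans_le hxz
  calc (z ^ (k + 1))⁻¹ = z ^ (β - (k + 1)) * z ^ (-β) := by
        rw [← Real.rpow_add hz, ← Real.rpow_natCast, ← Real.rpow_neg hz.le]
        push_cast; ring_nf
    _ ≤ x ^ (β - (k + 1)) * y ^ (-β) :=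
        mul_le_mul (Real.rpow_le_rpow_of_nonpos hx hxz (by linarith))
          (Real.rpow_le_rpow_of_nonpos hy hyz (by linarith)) (by positivity) (by positivity)

theorem tendsto_sub_rpow_nhdsGT {M e : ℝ} (he : 0 < e) :
    Tendsto (fun l => (l - M) ^ e) (𝓝[>] M) (𝓝 0) := by
  have hcont : ContinuousAt (fun l => (l - M) ^ e) M :=
    (continuousAt_id.sub continuousAt_const).rpow_const (Or.inr he.le)
  simpa [Real.zero_rpow he.ne'] using hcont.tendsto.mono_left nhdsWithin_le_nhds

section ResolventIntegral

variable {a b M : ℝ} {C : ℝ → ℝ}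

theorem intervalIntegrable_inv_sub_pow (hC : Continuous C) (hCM : ∀ θ, C θ ≤ M) {l : ℝ}
    (hl : M < l) (k : ℕ) : IntervalIntegrable (fun θ => ((l - C θ) ^ k)⁻¹) volume a b :=
  ((continuous_const.sub hC).pow k).inv₀
    (fun θ => pow_ne_zero _ (sub_pos.2 ((hCM θ).trans_lt hl)).ne') |>.intervalIntegrable a b

theorem integral_inv_sub_pow_nonneg (hab : a ≤ b) (hCM : ∀ θ, C θ ≤ M) {l : ℝ} (hl : M < l)
    (k : ℕ) : 0 ≤ ∫ θ in a..b, ((l - C θ) ^ k)⁻¹ :=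
  intervalIntegral.integral_nonneg hab fun θ _ => by
    have : 0 ≤ l - C θ := by linarith [hCM θ]
    positivity

theorem hasDerivAt_integral_inv_sub_pow (hC : Continuous C) (hCM : ∀ θ, C θ ≤ M) (n : ℕ)
    {l : ℝ} (hl : M < l) :
    HasDerivAt (fun x => ∫ θ in a..b, ((x - C θ) ^ (n + 1))⁻¹)
      (-((n + 1) * ∫ θ in a..b, ((l - C θ) ^ (n + 2))⁻¹)) l := by
  set r := (l - M) / 2 with hr_def
  have hr : 0 < r := by linarith
  have hgap : ∀ x ∈ Metric.ball l r, ∀ θ, r ≤ x - C θ := fun x hx θ => by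
    rw [Metric.mem_ball, Real.dist_eq, abs_lt] at hx
    linarith [hCM θ]
  have hderiv := intervalIntegral.hasDerivAt_integral_of_dominated_loc_of_deriv_le
    (μ := volume) (a := a) (b := b)
    (F := fun x θ => ((x - C θ) ^ (n + 1))⁻¹)
    (F' := fun x θ => -((n + 1) * ((x - C θ) ^ (n + 2))⁻¹))
    (bound := fun _ => (n + 1) * (r ^ (n + 2))⁻¹) (Metric.ball_mem_nhds l hr)
    (Eventually.of_forall fun x =>
      ((measurable_const.sub hC.measurable).pow_const _).inv.aestronglyMeasurable)
    (intervalIntegrable_inv_sub_pow hC hCM hl _)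
    (((measurable_const.sub hC.measurable).pow_const _).inv.const_mul _).neg.aestronglyMeasurable
    (ae_of_all _ fun θ _ x hx => by
      have hxθ := hgap x hx θ
      rw [norm_neg, norm_mul, Real.norm_of_nonneg (by positivity),
        Real.norm_of_nonneg (by have := hr.trans_le hxθ; positivity)]
      gcongr)
    intervalIntegrable_const
    (ae_of_all _ fun θ _ x hx => by
      have hne : x - C θ ≠ 0 := (hr.trans_le (hgap x hx θ)).ne'
      refine ((((hasDerivAt_id x).sub_const (C θ)).pow (n + 1)).inv
        (pow_ne_zero _ hne)).congr_deriv ?_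
      simp only [id, Nat.add_sub_cancel, Pi.pow_apply]
      push_cast
      field_simp
      ring)
  simpa only [intervalIntegral.integral_neg, intervalIntegral.integral_const_mul] using hderiv.2

theorem iteratedDeriv_eq_integral_inv_sub_pow (hC : Continuous C) (hCM : ∀ θ, C θ ≤ M)
    {L : ℝ → ℝ} (hL : ∀ l, M < l → L l = ∫ θ in a..b, 1 / (l - C θ)) (n : ℕ) {l : ℝ}
    (hl : M < l) :
    iteratedDeriv n L l = (-1) ^ n * n.factorial * ∫ θ in a..b, ((l - C θ) ^ (n + 1))⁻¹ := by
  induction n generalizing l with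
  | zero => simp [hL l hl]
  | succ n ih =>
    have hEq : iteratedDeriv n L =ᶠ[𝓝 l]
        fun x => (-1) ^ n * n.factorial * ∫ θ in a..b, ((x - C θ) ^ (n + 1))⁻¹ :=
      eventually_of_mem (isOpen_Ioi.mem_nhds hl) fun x hx => ih hx
    rw [iteratedDeriv_succ, hEq.deriv_eq,
      ((hasDerivAt_integral_inv_sub_pow hC hCM n hl).const_mul _).deriv]
    push_cast [Nat.factorial_succ, pow_succ]
    ring

theorem tendsto_sub_pow_mul_integral_inv_sub_pow (hC : Continuous C) (hCM : ∀ θ, C θ ≤ M)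
    (hnull : ∀ᵐ θ, C θ ≠ M) (k : ℕ) :
    Tendsto (fun l => (l - M) ^ (k + 1) * ∫ θ in a..b, ((l - C θ) ^ (k + 1))⁻¹)
      (𝓝[>] M) (𝓝 0) := by
  have hratio : (fun l => (l - M) ^ (k + 1) * ∫ θ in a..b, ((l - C θ) ^ (k + 1))⁻¹) =
      fun l => ∫ θ in a..b, ((l - M) / (l - C θ)) ^ (k + 1) := by
    funext l
    simp_rw [← intervalIntegral.integral_const_mul, div_pow, div_eq_mul_inv]
  rw [hratio]
  have hdct := intervalIntegral.tendsto_integral_filter_of_dominated_convergence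
    (μ := volume) (a := a) (b := b) (l := 𝓝[>] M) (f := fun _ => 0) (bound := fun _ => 1)
    (F := fun l θ => ((l - M) / (l - C θ)) ^ (k + 1))
    (Eventually.of_forall fun l => ((measurable_const.div
      (measurable_const.sub hC.measurable)).pow_const _).aestronglyMeasurable)
    (eventually_nhdsWithin_of_forall fun l (hl : M < l) => ae_of_all _ fun θ _ => by
      have hCθ := hCM θ
      have hratio0 : 0 ≤ (l - M) / (l - C θ) := div_nonneg (by linarith) (by linarith)
      rw [norm_pow, Real.norm_of_nonneg hratio0]
      exact pow_le_one₀ hratio0 ((div_le_one (by linarith)).2 (by linarith)))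
    intervalIntegrable_const
    (hnull.mono fun θ hθ _ => by
      have hcont : ContinuousAt (fun l => ((l - M) / (l - C θ)) ^ (k + 1)) M :=
        ((continuousAt_id.sub continuousAt_const).div (continuousAt_id.sub continuousAt_const)
          (sub_ne_zero.2 hθ.symm)).pow _
      simpa using hcont.tendsto.mono_left nhdsWithin_le_nhds)
  simpa using hdct

theorem tendsto_rpow_mul_integral_inv_sub_pow_of_le (hab : a ≤ b) (hC : Continuous C)
    (hCM : ∀ θ, C θ ≤ M) (hnull : ∀ᵐ θ, C θ ≠ M) {k : ℕ} {ν : ℝ} (hν : k + 1 ≤ ν) :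
    Tendsto (fun l => (l - M) ^ ν * ∫ θ in a..b, ((l - C θ) ^ (k + 1))⁻¹) (𝓝[>] M) (𝓝 0) := by
  refine squeeze_zero' ?_ ?_
    (tendsto_sub_pow_mul_integral_inv_sub_pow (a := a) (b := b) hC hCM hnull k)
  · filter_upwards [self_mem_nhdsWithin] with l (hl : M < l)
    exact mul_nonneg (Real.rpow_nonneg (by linarith) _) (integral_inv_sub_pow_nonneg hab hCM hl _)
  · filter_upwards [Ioo_mem_nhdsGT (lt_add_one M)] with l ⟨hl, hl1⟩
    gcongr
    · exact integral_inv_sub_pow_nonneg hab hCM hl _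
    · rw [← Real.rpow_natCast]
      exact Real.rpow_le_rpow_of_exponent_ge (by linarith) (by linarith) (by exact_mod_cast hν)

theorem tendsto_rpow_mul_integral_inv_sub_pow_of_intervalIntegrable (hab : a ≤ b)
    (hC : Continuous C) (hCM : ∀ θ, C θ ≤ M) (hnull : ∀ᵐ θ, C θ ≠ M) {k : ℕ} {β ν : ℝ}
    (hβ : 0 ≤ β) (hβk : β ≤ k + 1)
    (hint : IntervalIntegrable (fun θ => (M - C θ) ^ (-β)) volume a b) (hν : k + 1 - β < ν) :
    Tendsto (fun l => (l - M) ^ ν * ∫ θ in a..b, ((l - C θ) ^ (k + 1))⁻¹) (𝓝[>] M) (𝓝 0) := by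
  set K := ∫ θ in a..b, (M - C θ) ^ (-β)
  have hbound : ∀ l, M < l →
      ∫ θ in a..b, ((l - C θ) ^ (k + 1))⁻¹ ≤ (l - M) ^ (β - (k + 1)) * K := fun l hl => by
    rw [← intervalIntegral.integral_const_mul]
    refine intervalIntegral.integral_mono_ae hab (intervalIntegrable_inv_sub_pow hC hCM hl _)
      (hint.const_mul _) (hnull.mono fun θ hθ => ?_)
    have hCθ := lt_of_le_of_ne (hCM θ) hθ
    exact inv_pow_le_rpow_mul_rpow k (by linarith) (by linarith) (by linarith) (by linarith)
      hβ hβk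
  have hlim := (tendsto_sub_rpow_nhdsGT (M := M)
    (show 0 < ν + (β - (k + 1)) by linarith)).const_mul K
  rw [mul_zero] at hlim
  refine squeeze_zero' ?_ ?_ hlim
  · filter_upwards [self_mem_nhdsWithin] with l (hl : M < l)
    exact mul_nonneg (Real.rpow_nonneg (by linarith) _) (integral_inv_sub_pow_nonneg hab hCM hl _)
  · filter_upwards [self_mem_nhdsWithin] with l (hl : M < l)
    calc (l - M) ^ ν * ∫ θ in a..b, ((l - C θ) ^ (k + 1))⁻¹
        ≤ (l - M) ^ ν * ((l - M) ^ (β - (k + 1)) * K) := by gcongr; exact hbound l hl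
      _ = K * (l - M) ^ (ν + (β - (k + 1))) := by rw [Real.rpow_add (by linarith)]; ring

theorem tendsto_rpow_mul_iteratedDeriv (hC : Continuous C) (hCM : ∀ θ, C θ ≤ M)
    {L : ℝ → ℝ} (hL : ∀ l, M < l → L l = ∫ θ in a..b, 1 / (l - C θ)) {k : ℕ} {ν : ℝ}
    (h : Tendsto (fun l => (l - M) ^ ν * ∫ θ in a..b, ((l - C θ) ^ (k + 1))⁻¹) (𝓝[>] M) (𝓝 0)) :
    Tendsto (fun l => (l - M) ^ ν * iteratedDeriv k L l) (𝓝[>] M) (𝓝 0) := by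
  have hlim := h.const_mul ((-1 : ℝ) ^ k * k.factorial)
  rw [mul_zero] at hlim
  refine hlim.congr' ?_
  filter_upwards [self_mem_nhdsWithin] with l (hl : M < l)
  rw [iteratedDeriv_eq_integral_inv_sub_pow hC hCM hL k hl]
  ring

end ResolventIntegral

theorem stmt6_general
    (S : ℝ) (hS : 0 < S)
    (C : ℝ → ℝ)
    (hC_lip : ∃ K : NNReal, LipschitzWith K C)
    (hC_per : Function.Periodic C (2 * S))
    (M : ℝ) (hM : IsGreatest (C '' Set.Icc 0 (2 * S)) M)
    (L : ℝ → ℝ)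
    (hL : ∀ l : ℝ, M < l → L l = ∫ θ in (0:ℝ)..(2*S), 1 / (l - C θ))
    (θ₁ : ℝ) (hargmax : {θ | θ ∈ Set.Ico θ₁ (θ₁ + 2 * S) ∧ C θ = M} = {θ₁}) :
    (∀ k : ℕ, ∀ ν : ℝ, (k : ℝ) + 1 ≤ ν →
      Tendsto (fun l : ℝ => (l - M) ^ ν * iteratedDeriv k L l) (𝓝[>] M) (𝓝 0)) ∧
    (∀ A α ε : ℝ, 0 < A → 1 ≤ α → 0 < ε →
      (∀ θ : ℝ, |θ - θ₁| < ε → A * |θ - θ₁| ^ α ≤ M - C θ) →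
      ∀ k : ℕ, ∀ ν : ℝ, (k : ℝ) + 1 - 1 / α < ν →
        Tendsto (fun l : ℝ => (l - M) ^ ν * iteratedDeriv k L l) (𝓝[>] M) (𝓝 0)) := by
  have hC : Continuous C := hC_lip.choose_spec.continuous
  have h2S : 0 < 2 * S := by linarith
  have hCM : ∀ θ, C θ ≤ M := fun θ => by
    obtain ⟨y, hy, hCy⟩ := hC_per.exists_mem_Ico₀ h2S θ
    exact hCy ▸ hM.2 ⟨y, Ico_subset_Icc_self hy, rfl⟩
  have hnull : ∀ᵐ θ, C θ ≠ M := hC_per.ae_ne_of_setOf_Ico_eq_singleton h2S hargmax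
  refine ⟨fun k ν hν => tendsto_rpow_mul_iteratedDeriv hC hCM hL
    (tendsto_rpow_mul_integral_inv_sub_pow_of_le h2S.le hC hCM hnull hν),
    fun A α ε hA hα hε hgrowth k ν hν => ?_⟩
  have hα0 : 0 < 1 / α := by positivity
  obtain ⟨β, hβlo, hβhi⟩ := exists_between (max_lt (show k + 1 - ν < 1 / α by linarith) hα0)
  have hβ0 : 0 ≤ β := (le_max_right _ _).trans hβlo.le
  have hαβ : α * β < 1 := by rwa [lt_div_iff₀ (by linarith), mul_comm] at hβhi
  have hβk : β ≤ k + 1 := by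
    have : 1 / α ≤ 1 := by rw [div_le_one (by linarith)]; exact hα
    linarith [(k.cast_nonneg : (0 : ℝ) ≤ k)]
  have hpos : ∀ θ ∈ uIcc (θ₁ - S) (θ₁ + S), θ ≠ θ₁ → 0 < M - C θ := fun θ hθ hne => by
    rw [uIcc_of_le (by linarith), mem_Icc] at hθ
    have hdist : |θ - θ₁| < 2 * S := by rw [abs_lt]; constructor <;> linarith
    exact sub_pos.2 ((hCM θ).lt_of_ne
      (hC_per.ne_of_setOf_Ico_eq_singleton hargmax (abs_pos.2 (sub_ne_zero.2 hne)) hdist))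
  have hint := intervalIntegrable_rpow_neg_of_growth (continuous_const.sub hC) hA hε hβ0 hαβ
    hpos hgrowth
  have hper : Function.Periodic (fun θ => (M - C θ) ^ (-β)) (2 * S) := fun θ => by
    simp only [hC_per θ]
  rw [show θ₁ + S = θ₁ - S + 2 * S by ring] at hint
  exact tendsto_rpow_mul_iteratedDeriv hC hCM hL
    (tendsto_rpow_mul_integral_inv_sub_pow_of_intervalIntegrable h2S.le hC hCM hnull hβ0 hβk
      (hper.intervalIntegrable h2S.ne' hint 0 (2 * S)) (by linarith [le_max_left (k + 1 - ν) 0]))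

theorem stmt6
    (S : ℝ) (hS : 0 < S)
    (C Sg c s : ℝ → ℝ)
    (hC_lip : ∃ K : NNReal, LipschitzWith K C)
    (hSg_lip : ∃ K : NNReal, LipschitzWith K Sg)
    (hC_per : Function.Periodic C (2 * S))
    (hSg_per : Function.Periodic Sg (2 * S))
    (hc_meas : Measurable c) (hs_meas : Measurable s)
    (hc_bdd : ∃ B : ℝ, ∀ θ, |c θ| ≤ B) (hs_bdd : ∃ B : ℝ, ∀ θ, |s θ| ≤ B)
    (hconv : ∀ᵐ θ ∂(volume : Measure ℝ), HasDerivAt C (-(s θ)) θ ∧ HasDerivAt Sg (c θ) θ ∧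
      c θ * C θ + s θ * Sg θ = 1)
    (M : ℝ) (hM : IsGreatest (C '' Set.Icc 0 (2 * S)) M)
    (L F : ℝ → ℝ)
    (hL : ∀ l : ℝ, M < l → L l = ∫ θ in (0:ℝ)..(2*S), 1 / (l - C θ))
    (hF : ∀ l : ℝ, M < l → F l = ∫ θ in (0:ℝ)..(2*S), c θ / (l - C θ))
    (θ₁ : ℝ) (hargmax : {θ | θ ∈ Set.Ico θ₁ (θ₁ + 2 * S) ∧ C θ = M} = {θ₁}) :
    (∀ k : ℕ, ∀ ν : ℝ, (k : ℝ) + 1 ≤ ν →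
      Tendsto (fun l : ℝ => (l - M) ^ ν * iteratedDeriv k L l) (𝓝[>] M) (𝓝 0)) ∧
    (∀ A α ε : ℝ, 0 < A → 1 ≤ α → 0 < ε →
      (∀ θ : ℝ, |θ - θ₁| < ε → A * |θ - θ₁| ^ α ≤ M - C θ) →
      ∀ k : ℕ, ∀ ν : ℝ, (k : ℝ) + 1 - 1 / α < ν →
        Tendsto (fun l : ℝ => (l - M) ^ ν * iteratedDeriv k L l) (𝓝[>] M) (𝓝 0)) :=
  stmt6_general S hS C hC_lip hC_per M hM L hL θ₁ hargmax
end

section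
/- Assume M > 0. Then for every real number A > 0 the equation F(λ) = A has a unique solution λ in the interval (M, +∞). -/
/-!
Write `u = λ - C > 0` for `λ > M`. Almost everywhere `(Σ/u)' = c/u - sΣ/u² = (λc - 1)/u²` by the
Pythagorean identity, and `Σ/u` is Lipschitz and `2S`-periodic, so `λ ∫ c/u² = ∫ 1/u²`.
Differentiating under the integral sign, `F' = -∫ c/u² = L'/λ < 0`, so `F` is strictly decreasing.
On `(M, λ₁]` the function `F - L/λ₁` is then decreasing, whence `F(λ) ≥ F(λ₁) + (L(λ) - L(λ₁))/λ₁`;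
and `L(λ) → ∞` as `λ → M⁺`, because near a point where `C = M` the Lipschitz bound gives
`u ≤ (λ - M) + K|θ - θ₀|`, whose reciprocal has integral of order `log (1/(λ - M))`. Finally
`F(λ) → 0` as `λ → ∞`, and the intermediate value theorem gives the solution.
-/

open MeasureTheory Filter Set Topology
open scoped NNReal Interval

section RealAnalysis

lemma integral_one_div_add_mul {ε K T : ℝ} (hε : 0 < ε) (hK : 0 < K) (hT : 0 ≤ T) :
    ∫ t in (0 : ℝ)..T, 1 / (ε + K * t) = K⁻¹ * Real.log ((ε + K * T) / ε) := by
  have h := intervalIntegral.integral_comp_mul_add (a := 0) (b := T) (fun x => 1 / x) hK.ne' ε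
  simp only [mul_zero, zero_add, smul_eq_mul] at h
  rw [integral_one_div_of_pos hε (by positivity)] at h
  simpa only [add_comm ε] using h

lemma tendsto_nhdsGT_atTop_of_hasDerivAt_div {F L L' : ℝ → ℝ} {M : ℝ} (hM : 0 ≤ M)
    (hL : ∀ l, M < l → HasDerivAt L (L' l) l) (hF : ∀ l, M < l → HasDerivAt F (L' l / l) l)
    (hL' : ∀ l, M < l → L' l ≤ 0) (hL_lim : Tendsto L (𝓝[>] M) atTop) :
    Tendsto F (𝓝[>] M) atTop := by
  set l₁ := M + 1
  have hl₁ : 0 < l₁ := by positivity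
  have hG : ∀ l, M < l → HasDerivAt (fun l => F l - L l / l₁) (L' l * (l⁻¹ - l₁⁻¹)) l :=
    fun l hl => ((hF l hl).sub ((hL l hl).div_const l₁)).congr_deriv (by ring)
  have hG_anti : AntitoneOn (fun l => F l - L l / l₁) (Ioc M l₁) := by
    apply antitoneOn_of_deriv_nonpos (convex_Ioc M l₁)
    · exact fun l hl => (hG l hl.1).continuousAt.continuousWithinAt
    · rw [interior_Ioc]
      exact fun l hl => (hG l hl.1).differentiableAt.differentiableWithinAt
    · rw [interior_Ioc]
      intro l hl
      rw [(hG l hl.1).deriv]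
      exact mul_nonpos_of_nonpos_of_nonneg (hL' l hl.1)
        (sub_nonneg.2 (inv_anti₀ (by linarith [hl.1]) hl.2.le))
  have hF_ge : ∀ᶠ l in 𝓝[>] M, F l₁ + (L l - L l₁) / l₁ ≤ F l := by
    filter_upwards [Ioc_mem_nhdsGT (show M < l₁ by linarith)] with l hl
    have := hG_anti hl ⟨by linarith, le_rfl⟩ hl.2
    rw [sub_div]
    linarith
  refine tendsto_atTop_mono' _ hF_ge (tendsto_atTop_add_const_left _ _ ?_)
  exact (tendsto_atTop_add_const_right _ _ hL_lim).atTop_div_const hl₁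

lemma existsUnique_eq_of_strictAntiOn_Ioi {F : ℝ → ℝ} {M b A : ℝ}
    (hF_anti : StrictAntiOn F (Ioi M)) (hF_cont : ContinuousOn F (Ioi M))
    (hF_left : Tendsto F (𝓝[>] M) atTop) (hF_right : Tendsto F atTop (𝓝 b)) (hA : b < A) :
    ∃! l, l ∈ Ioi M ∧ F l = A := by
  obtain ⟨l₀, hl₀A, hl₀M⟩ := ((hF_left.eventually_gt_atTop A).and self_mem_nhdsWithin).exists
  obtain ⟨l₁, hl₁A, hl₀l₁⟩ :=
    ((hF_right.eventually (gt_mem_nhds hA)).and (eventually_ge_atTop l₀)).exists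
  have hsub : Icc l₀ l₁ ⊆ Ioi M := fun x hx => hl₀M.trans_le hx.1
  obtain ⟨l, hl, hFl⟩ := intermediate_value_Icc' hl₀l₁ (hF_cont.mono hsub) ⟨hl₁A.le, hl₀A.le⟩
  exact ⟨l, ⟨hsub hl, hFl⟩, fun y hy => hF_anti.injOn hy.1 (hsub hl) (hy.2.trans hFl.symm)⟩

lemma LipschitzWith.inv_of_le {g : ℝ → ℝ} {K : ℝ≥0} {r : ℝ} (hg : LipschitzWith K g)
    (hr : 0 < r) (hgr : ∀ x, r ≤ g x) :
    LipschitzWith (K / r.toNNReal ^ 2) fun x => (g x)⁻¹ := by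
  refine LipschitzWith.of_dist_le_mul fun x y => ?_
  have hx := hr.trans_le (hgr x)
  have hy := hr.trans_le (hgr y)
  have hxy : r ^ 2 ≤ g x * g y := by nlinarith [hgr x, hgr y]
  rw [Real.dist_eq, inv_sub_inv hx.ne' hy.ne', abs_div, abs_of_pos (mul_pos hx hy),
    abs_sub_comm, NNReal.coe_div, NNReal.coe_pow, Real.coe_toNNReal _ hr.le, div_mul_eq_mul_div]
  exact div_le_div₀ (by positivity) (by simpa only [Real.dist_eq] using hg.dist_le_mul x y)
    (by positivity) hxy

end RealAnalysis

section IntegralDivSub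

variable {C w : ℝ → ℝ} {M a b l : ℝ}

lemma intervalIntegrable_div_sub_pow (hC : Continuous C) (hCM : ∀ θ, C θ ≤ M)
    (hw : IntervalIntegrable w volume a b) (hl : M < l) (n : ℕ) :
    IntervalIntegrable (fun θ => w θ / (l - C θ) ^ n) volume a b := by
  have hcont : Continuous fun θ => ((l - C θ) ^ n)⁻¹ :=
    ((continuous_const.sub hC).pow n).inv₀ fun θ =>
      pow_ne_zero _ (sub_pos.2 ((hCM θ).trans_lt hl)).ne'
  simpa only [div_eq_mul_inv] using hw.mul_continuousOn hcont.continuousOn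

lemma hasDerivAt_integral_div_sub (hC : Continuous C) (hCM : ∀ θ, C θ ≤ M)
    (hw : IntervalIntegrable w volume a b) (hl : M < l) :
    HasDerivAt (fun x => ∫ θ in a..b, w θ / (x - C θ))
      (-∫ θ in a..b, w θ / (l - C θ) ^ 2) l := by
  set ε := (l - M) / 2 with hε_def
  have hε : 0 < ε := by linarith
  have hball : ∀ x ∈ Metric.ball l ε, ∀ θ, ε ≤ x - C θ := fun x hx θ => by
    rw [Metric.mem_ball, Real.dist_eq] at hx
    linarith [(abs_lt.1 hx).1, hCM θ, hε_def]
  have hmeas : ∀ (x : ℝ) (n : ℕ),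
      AEStronglyMeasurable (fun θ => w θ / (x - C θ) ^ n) (volume.restrict (Ι a b)) :=
    fun x n => hw.def'.aestronglyMeasurable.div₀
      ((continuous_const.sub hC).pow n).aestronglyMeasurable
  have key := intervalIntegral.hasDerivAt_integral_of_dominated_loc_of_deriv_le
    (F := fun x θ => w θ / (x - C θ)) (F' := fun x θ => -(w θ / (x - C θ) ^ 2))
    (bound := fun θ => ‖w θ‖ / ε ^ 2) (Metric.ball_mem_nhds l hε)
    (Eventually.of_forall fun x => by simpa using hmeas x 1)
    (by simpa using intervalIntegrable_div_sub_pow hC hCM hw hl 1) (hmeas l 2).neg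
    (ae_of_all _ fun θ _ x hx => ?_) (hw.norm.div_const _) (ae_of_all _ fun θ _ x hx => ?_)
  · simpa only [intervalIntegral.integral_neg] using key.2
  · have hεx := hball x hx θ
    rw [norm_neg, norm_div, norm_pow, Real.norm_of_nonneg (hε.le.trans hεx)]
    gcongr
  · have hne : x - C θ ≠ 0 := (hε.trans_le (hball x hx θ)).ne'
    exact ((hasDerivAt_const x (w θ)).div ((hasDerivAt_id' x).sub_const (C θ)) hne).congr_deriv
      (by ring)

lemma integral_one_div_sub_sq_pos (hC : Continuous C) (hCM : ∀ θ, C θ ≤ M) (hl : M < l)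
    (hab : a < b) : 0 < ∫ θ in a..b, 1 / (l - C θ) ^ 2 :=
  intervalIntegral.intervalIntegral_pos_of_pos_on
    (intervalIntegrable_div_sub_pow hC hCM intervalIntegrable_const hl 2)
    (fun θ _ => one_div_pos.2 (pow_pos (by linarith [hCM θ]) 2)) hab

lemma tendsto_integral_div_sub_atTop (hC : Continuous C) (hCM : ∀ θ, C θ ≤ M)
    (hw : IntervalIntegrable w volume a b) :
    Tendsto (fun l => ∫ θ in a..b, w θ / (l - C θ)) atTop (𝓝 0) := by
  have hbound : ∀ᶠ l in atTop, ∀ᵐ θ, θ ∈ Ι a b → ‖w θ / (l - C θ)‖ ≤ ‖w θ‖ := by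
    filter_upwards [eventually_ge_atTop (M + 1)] with l hl
    refine ae_of_all _ fun θ _ => ?_
    rw [norm_div]
    exact div_le_self (norm_nonneg _)
      (by rw [Real.norm_of_nonneg (by linarith [hCM θ])]; linarith [hCM θ])
  have hlim : ∀ θ, Tendsto (fun l => w θ / (l - C θ)) atTop (𝓝 0) := fun θ =>
    tendsto_const_nhds.div_atTop (tendsto_atTop_add_const_right _ _ tendsto_id)
  simpa using intervalIntegral.tendsto_integral_filter_of_dominated_convergence _
    (Eventually.of_forall fun l => hw.def'.aestronglyMeasurable.div₀
      (continuous_const.sub hC).aestronglyMeasurable)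
    hbound hw.norm (ae_of_all _ fun θ _ => hlim θ)

end IntegralDivSub

section ConvexTrigonometry

variable {C Sg c s : ℝ → ℝ} {T M l : ℝ}

lemma tendsto_integral_one_div_sub_nhdsGT {K : ℝ≥0} {θ₀ : ℝ} (hT : 0 < T)
    (hC_lip : LipschitzWith K C) (hC_per : Function.Periodic C T) (hCM : ∀ θ, C θ ≤ M)
    (hθ₀ : C θ₀ = M) :
    Tendsto (fun l => ∫ θ in (0 : ℝ)..T, 1 / (l - C θ)) (𝓝[>] M) atTop := by
  set K' : ℝ := K + 1
  have hK' : 0 < K' := by positivity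
  have hC_ge : ∀ θ, θ₀ ≤ θ → M - C θ ≤ K' * (θ - θ₀) := fun θ hθ => by
    have h := hC_lip.dist_le_mul θ θ₀
    rw [Real.dist_eq, Real.dist_eq, hθ₀, abs_of_nonneg (sub_nonneg.2 hθ)] at h
    nlinarith [neg_abs_le (C θ - M)]
  have hL_ge : ∀ l, M < l →
      K'⁻¹ * Real.log ((l - M + K' * T) / (l - M)) ≤ ∫ θ in (0 : ℝ)..T, 1 / (l - C θ) := by
    intro l hl
    have hu : ∀ θ, 0 < l - C θ := fun θ => by linarith [hCM θ]
    have hcont : Continuous fun θ => 1 / (l - C θ) :=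
      continuous_const.div (continuous_const.sub hC_lip.continuous) fun θ => (hu θ).ne'
    have hper : Function.Periodic (fun θ => 1 / (l - C θ)) T := fun θ => by
      simp only [hC_per θ]
    have hpos : ∀ θ, θ₀ ≤ θ → 0 < l - M + K' * (θ - θ₀) := fun θ hθ => by
      nlinarith
    calc K'⁻¹ * Real.log ((l - M + K' * T) / (l - M))
        = ∫ t in (0 : ℝ)..T, 1 / (l - M + K' * t) :=
          (integral_one_div_add_mul (sub_pos.2 hl) hK' hT.le).symm
      _ = ∫ θ in θ₀..θ₀ + T, 1 / (l - M + K' * (θ - θ₀)) := by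
          rw [intervalIntegral.integral_comp_sub_right (fun t => 1 / (l - M + K' * t))]
          simp
      _ ≤ ∫ θ in θ₀..θ₀ + T, 1 / (l - C θ) := by
          refine intervalIntegral.integral_mono_on (by linarith)
            (ContinuousOn.intervalIntegrable ?_) (hcont.intervalIntegrable _ _)
            fun θ hθ => one_div_le_one_div_of_le (hu θ) (by linarith [hC_ge θ hθ.1])
          exact continuousOn_const.div (by fun_prop) fun θ hθ =>
            (hpos θ (by rw [uIcc_of_le (by linarith)] at hθ; exact hθ.1)).ne'
      _ = ∫ θ in (0 : ℝ)..T, 1 / (l - C θ) := by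
          simpa using hper.intervalIntegral_add_eq θ₀ 0
  have h_sub : Tendsto (fun l => l - M) (𝓝[>] M) (𝓝[>] 0) := by
    refine tendsto_nhdsWithin_of_tendsto_nhds_of_eventually_within _
      (((continuous_sub_right M).tendsto' M 0 (sub_self M)).mono_left nhdsWithin_le_nhds) ?_
    exact eventually_nhdsWithin_of_forall fun l (hl : M < l) => sub_pos.2 hl
  have h_ratio : Tendsto (fun l => (l - M + K' * T) / (l - M)) (𝓝[>] M) atTop := by
    refine (tendsto_atTop_add_const_left _ 1
      ((tendsto_inv_nhdsGT_zero.comp h_sub).const_mul_atTop (by positivity : 0 < K' * T))).congr'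
      (eventually_nhdsWithin_of_forall fun l (hl : M < l) => ?_)
    have : l - M ≠ 0 := (sub_pos.2 hl).ne'
    simp only [Function.comp]
    field_simp
  exact tendsto_atTop_mono' _ (eventually_nhdsWithin_of_forall hL_ge)
    ((Real.tendsto_log_atTop.comp h_ratio).const_mul_atTop (inv_pos.2 hK'))

lemma mul_integral_div_sub_sq_eq {K₁ K₂ : ℝ≥0} (hC_lip : LipschitzWith K₁ C)
    (hSg_lip : LipschitzWith K₂ Sg) (hC_per : Function.Periodic C T)
    (hSg_per : Function.Periodic Sg T)
    (hconv : ∀ᵐ θ, HasDerivAt C (-(s θ)) θ ∧ HasDerivAt Sg (c θ) θ ∧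
      c θ * C θ + s θ * Sg θ = 1)
    (hc : IntervalIntegrable c volume 0 T) (hCM : ∀ θ, C θ ≤ M) (hl : M < l) :
    l * ∫ θ in (0 : ℝ)..T, c θ / (l - C θ) ^ 2 = ∫ θ in (0 : ℝ)..T, 1 / (l - C θ) ^ 2 := by
  have hu_ge : ∀ θ, l - M ≤ l - C θ := fun θ => by linarith [hCM θ]
  have hu : ∀ θ, l - C θ ≠ 0 := fun θ => ((sub_pos.2 hl).trans_le (hu_ge θ)).ne'
  set f := fun θ => Sg θ * (l - C θ)⁻¹
  have hf_ac : AbsolutelyContinuousOnInterval f 0 T :=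
    hSg_lip.lipschitzOnWith.absolutelyContinuousOnInterval.fun_mul
      (((LipschitzWith.const l).sub hC_lip).inv_of_le (sub_pos.2 hl)
        hu_ge).lipschitzOnWith.absolutelyContinuousOnInterval
  have hf_deriv : ∀ᵐ θ, θ ∈ Ι 0 T →
      deriv f θ = l * (c θ / (l - C θ) ^ 2) - 1 / (l - C θ) ^ 2 := by
    filter_upwards [hconv] with θ ⟨hCθ, hSgθ, hpyth⟩ _
    rw [HasDerivAt.deriv (f := f) (hSgθ.mul ((hCθ.const_sub l).inv (hu θ)))]
    have := hu θ
    field_simp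
    linear_combination -hpyth
  have h := hf_ac.integral_deriv_eq_sub
  rw [intervalIntegral.integral_congr_ae hf_deriv, intervalIntegral.integral_sub
    ((intervalIntegrable_div_sub_pow hC_lip.continuous hCM hc hl 2).const_mul l)
    (intervalIntegrable_div_sub_pow hC_lip.continuous hCM intervalIntegrable_const hl 2),
    intervalIntegral.integral_const_mul] at h
  have hper : f T = f 0 := by
    simpa [f] using congrArg₂ (fun x y => x * (l - y)⁻¹) (hSg_per 0) (hC_per 0)
  rw [hper, sub_self] at h
  linarith

lemma hasDerivAt_integral_div_sub_of_pythagorean {K₁ K₂ : ℝ≥0} (hC_lip : LipschitzWith K₁ C)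
    (hSg_lip : LipschitzWith K₂ Sg) (hC_per : Function.Periodic C T)
    (hSg_per : Function.Periodic Sg T)
    (hconv : ∀ᵐ θ, HasDerivAt C (-(s θ)) θ ∧ HasDerivAt Sg (c θ) θ ∧
      c θ * C θ + s θ * Sg θ = 1)
    (hc : IntervalIntegrable c volume 0 T) (hCM : ∀ θ, C θ ≤ M) (hl : M < l) (hl₀ : l ≠ 0) :
    HasDerivAt (fun x => ∫ θ in (0 : ℝ)..T, c θ / (x - C θ))
      ((-∫ θ in (0 : ℝ)..T, 1 / (l - C θ) ^ 2) / l) l := by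
  refine (hasDerivAt_integral_div_sub hC_lip.continuous hCM hc hl).congr_deriv ?_
  rw [← mul_integral_div_sub_sq_eq hC_lip hSg_lip hC_per hSg_per hconv hc hCM hl, neg_div,
    mul_div_cancel_left₀ _ hl₀]

end ConvexTrigonometry

theorem stmt11_general
    (S : ℝ) (hS : 0 < S)
    (C Sg c s : ℝ → ℝ)
    (hC_lip : ∃ K : NNReal, LipschitzWith K C)
    (hSg_lip : ∃ K : NNReal, LipschitzWith K Sg)
    (hC_per : Function.Periodic C (2 * S))
    (hSg_per : Function.Periodic Sg (2 * S))
    (hc_meas : Measurable c)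
    (hc_bdd : ∃ B : ℝ, ∀ θ, |c θ| ≤ B)
    (hconv : ∀ᵐ θ ∂(volume : Measure ℝ), HasDerivAt C (-(s θ)) θ ∧ HasDerivAt Sg (c θ) θ ∧
      c θ * C θ + s θ * Sg θ = 1)
    (M : ℝ) (hM : IsGreatest (C '' Set.Icc 0 (2 * S)) M)
    (L F : ℝ → ℝ)
    (hL : ∀ l : ℝ, M < l → L l = ∫ θ in (0:ℝ)..(2*S), 1 / (l - C θ))
    (hF : ∀ l : ℝ, M < l → F l = ∫ θ in (0:ℝ)..(2*S), c θ / (l - C θ))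
    (hM0 : 0 < M) :
    ∀ A : ℝ, 0 < A → ∃! l : ℝ, l ∈ Set.Ioi M ∧ F l = A := by
  intro A hA
  obtain ⟨KC, hKC⟩ := hC_lip
  obtain ⟨KS, hKS⟩ := hSg_lip
  obtain ⟨B, hB⟩ := hc_bdd
  have hT : 0 < 2 * S := by positivity
  rw [← zero_add (2 * S), hC_per.image_Icc hT] at hM
  obtain ⟨⟨θ₀, hθ₀⟩, hCM⟩ := hM
  replace hCM : ∀ θ, C θ ≤ M := fun θ => hCM ⟨θ, rfl⟩
  have hc : IntervalIntegrable c volume 0 (2 * S) :=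
    (intervalIntegrable_const (c := B)).mono_fun hc_meas.aestronglyMeasurable
      (ae_of_all _ fun θ => (hB θ).trans (le_abs_self B))
  set L' := fun l => -∫ θ in (0:ℝ)..(2*S), 1 / (l - C θ) ^ 2
  have hL' : ∀ l, M < l → HasDerivAt L (L' l) l := fun l hl =>
    (hasDerivAt_integral_div_sub hKC.continuous hCM intervalIntegrable_const
      hl).congr_of_eventuallyEq (eventually_of_mem (isOpen_Ioi.mem_nhds hl) hL)
  have hF' : ∀ l, M < l → HasDerivAt F (L' l / l) l := fun l hl =>
    (hasDerivAt_integral_div_sub_of_pythagorean hKC hKS hC_per hSg_per hconv hc hCM hl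
      (hM0.trans hl).ne').congr_of_eventuallyEq (eventually_of_mem (isOpen_Ioi.mem_nhds hl) hF)
  have hL'_neg : ∀ l, M < l → L' l < 0 := fun l hl =>
    neg_neg_of_pos (integral_one_div_sub_sq_pos hKC.continuous hCM hl hT)
  have hF_cont : ContinuousOn F (Ioi M) := fun l hl => (hF' l hl).continuousAt.continuousWithinAt
  have hF_anti : StrictAntiOn F (Ioi M) :=
    strictAntiOn_of_hasDerivWithinAt_neg (convex_Ioi M) hF_cont
      (by simpa using fun l hl => (hF' l hl).hasDerivWithinAt)
      (by simpa using fun l hl => div_neg_of_neg_of_pos (hL'_neg l hl) (hM0.trans hl))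
  refine existsUnique_eq_of_strictAntiOn_Ioi hF_anti hF_cont ?_ ?_ hA
  · exact tendsto_nhdsGT_atTop_of_hasDerivAt_div hM0.le hL' hF' (fun l hl => (hL'_neg l hl).le)
      ((tendsto_integral_one_div_sub_nhdsGT hT hKC hC_per hCM hθ₀).congr'
        (eventually_nhdsWithin_of_forall fun l hl => (hL l hl).symm))
  · exact (tendsto_integral_div_sub_atTop hKC.continuous hCM hc).congr'
      (eventually_of_mem (Ioi_mem_atTop M) fun l hl => (hF l hl).symm)

theorem stmt11
    (S : ℝ) (hS : 0 < S)
    (C Sg c s : ℝ → ℝ)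
    (hC_lip : ∃ K : NNReal, LipschitzWith K C)
    (hSg_lip : ∃ K : NNReal, LipschitzWith K Sg)
    (hC_per : Function.Periodic C (2 * S))
    (hSg_per : Function.Periodic Sg (2 * S))
    (hc_meas : Measurable c) (hs_meas : Measurable s)
    (hc_bdd : ∃ B : ℝ, ∀ θ, |c θ| ≤ B) (hs_bdd : ∃ B : ℝ, ∀ θ, |s θ| ≤ B)
    (hconv : ∀ᵐ θ ∂(volume : Measure ℝ), HasDerivAt C (-(s θ)) θ ∧ HasDerivAt Sg (c θ) θ ∧
      c θ * C θ + s θ * Sg θ = 1)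
    (M : ℝ) (hM : IsGreatest (C '' Set.Icc 0 (2 * S)) M)
    (L F : ℝ → ℝ)
    (hL : ∀ l : ℝ, M < l → L l = ∫ θ in (0:ℝ)..(2*S), 1 / (l - C θ))
    (hF : ∀ l : ℝ, M < l → F l = ∫ θ in (0:ℝ)..(2*S), c θ / (l - C θ))
    (hM0 : 0 < M) :
    ∀ A : ℝ, 0 < A → ∃! l : ℝ, l ∈ Set.Ioi M ∧ F l = A :=
  stmt11_general S hS C Sg c s hC_lip hSg_lip hC_per hSg_per hc_meas hc_bdd hconv M hM L F hL hF hM0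
end
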